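/- Existence of resistant hyperplanes: Let S₁, …, S_{d+1} be pairwise disjoint nonempty subsets of [n] with {x_i : i ∈ S_t} well separable in ℝᵈ, and fix y ∈ ℝⁿ. For every vector k with k_t ∈ [|S_t|], there exists an affine function β : ℝᵈ → ℝ such that the k_t-th smallest residual among {y_i − β(x_i) : i ∈ S_t} is zero for all t ∈ [d+1]. -/

import Mathlib

/-- Evaluation of the affine function `β(p) = ⟨β₁, p⟩ + β₀`. -/
def affEval {d : ℕ} (β : (Fin d → ℝ) × ℝ) (p : Fin d → ℝ) : ℝ :=
  (∑ j, β.1 j * p j) + β.2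

/-- The sets `X 0, …, X (m-1)` in `ℝᵈ` are well separable. -/
def WellSeparable {d m : ℕ} (X : Fin m → Set (Fin d → ℝ)) : Prop :=
  ∀ I J : Finset (Fin m), Disjoint I J →
    ∃ (w : Fin d → ℝ) (c : ℝ),
      (∀ t ∈ I, ∀ p ∈ X t, (∑ j, w j * p j) < c) ∧
      (∀ t ∈ J, ∀ p ∈ X t, c < (∑ j, w j * p j))

/-- The `k`-th smallest value of the multiset `{r i : i ∈ s}` (1-indexed). -/
noncomputable def kthSmallest {n : ℕ} (s : Finset (Fin n)) (r : Fin n → ℝ) (k : ℕ) : ℝ :=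
  (Multiset.sort (s.val.map r) (· ≤ ·)).getD (k - 1) 0

/-!
For a transversal `f` (one index `f t ∈ S t` for each `t`), the points `x (f t)` are affinely
independent: by Radon's theorem an affine dependence among points of the convex hulls of the
sets `x '' S t` would split them into two groups whose convex hulls meet, contradicting
well separability. Hence there is an affine function `B f` interpolating `y` at these points.
Ranking `f t` among the residuals of `B f` on `S t`, ties broken by index, gives a vector `k`
realised by `B f`. Conversely a vector `k` is realised by at most one affine function: the
difference of two such functions changes sign on each `S t`, so it vanishes at a point of each
convex hull, and these points are again affinely independent. Thus the rank map is injective from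
transversals to admissible vectors `k`; both sets have `∏ t, #(S t)` elements, so it is onto.
-/

open Finset

def affEvalAffine {d : ℕ} (β : (Fin d → ℝ) × ℝ) : (Fin d → ℝ) →ᵃ[ℝ] ℝ :=
  (dotProductEquiv ℝ (Fin d) β.1).toAffineMap + AffineMap.const ℝ _ β.2

@[simp]
lemma coe_affEvalAffine {d : ℕ} (β : (Fin d → ℝ) × ℝ) : ⇑(affEvalAffine β) = affEval β := by
  ext p
  simp [affEvalAffine, affEval, dotProduct]

lemma affEvalAffine_injective {d : ℕ} : Function.Injective (affEvalAffine (d := d)) := by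
  intro β β' h
  have h2 : β.2 = β'.2 := by simpa [affEval] using congrArg (· 0) h
  refine Prod.ext (funext fun j => ?_) h2
  simpa [affEval, h2, Pi.single_apply] using congrArg (· (Pi.single j 1)) h

lemma affEvalAffine_surjective {d : ℕ} : Function.Surjective (affEvalAffine (d := d)) := by
  intro φ
  refine ⟨((dotProductEquiv ℝ (Fin d)).symm φ.linear, φ 0), AffineMap.ext fun p => ?_⟩
  have hlin := (dotProductEquiv ℝ (Fin d)).apply_symm_apply φ.linear
  calc affEvalAffine _ p
      = dotProductEquiv ℝ (Fin d) ((dotProductEquiv ℝ (Fin d)).symm φ.linear) p + φ 0 := by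
        simp only [affEvalAffine, AffineMap.coe_add, Pi.add_apply, LinearMap.coe_toAffineMap,
          AffineMap.const_apply]
    _ = φ p := by rw [hlin, φ.decomp]; simp

lemma AffineMap.exists_mem_convexHull_eq_zero {E : Type*} [AddCommGroup E] [Module ℝ E]
    (φ : E →ᵃ[ℝ] ℝ) {X : Set E} {p q : E} (hp : p ∈ X) (hq : q ∈ X)
    (hφp : φ p ≤ 0) (hφq : 0 ≤ φ q) : ∃ z ∈ convexHull ℝ X, φ z = 0 := by
  have h0 : (0 : ℝ) ∈ convexHull ℝ (φ '' X) :=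
    segment_subset_convexHull (Set.mem_image_of_mem φ hp) (Set.mem_image_of_mem φ hq)
      (by rw [segment_eq_Icc (hφp.trans hφq)]; exact ⟨hφp, hφq⟩)
  rwa [← AffineMap.image_convexHull] at h0

lemma WellSeparable.affineIndependent {d m : ℕ} {X : Fin m → Set (Fin d → ℝ)}
    (hX : WellSeparable X) {z : Fin m → Fin d → ℝ} (hz : ∀ t, z t ∈ convexHull ℝ (X t)) :
    AffineIndependent ℝ z := by
  classical
  by_contra hdep
  obtain ⟨I, p, hpI, hpJ⟩ := Convex.radon_partition hdep
  obtain ⟨w, c, hlt, hgt⟩ := hX I.toFinset Iᶜ.toFinset (by simp [Finset.disjoint_left])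
  have hlin : IsLinearMap ℝ fun q : Fin d → ℝ => ∑ j, w j * q j :=
    (dotProductEquiv ℝ (Fin d) w).isLinear
  have hI : convexHull ℝ (z '' I) ⊆ {q | ∑ j, w j * q j < c} := by
    refine convexHull_min ?_ (convex_halfSpace_lt hlin c)
    rintro - ⟨t, ht, rfl⟩
    exact convexHull_min (hlt t (by simpa using ht)) (convex_halfSpace_lt hlin c) (hz t)
  have hJ : convexHull ℝ (z '' Iᶜ) ⊆ {q | c < ∑ j, w j * q j} := by
    refine convexHull_min ?_ (convex_halfSpace_gt hlin c)
    rintro - ⟨t, ht, rfl⟩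
    exact convexHull_min (hgt t (by simpa using ht)) (convex_halfSpace_gt hlin c) (hz t)
  exact lt_asymm (Set.mem_ofPred.mp (hI hpI)) (Set.mem_ofPred.mp (hJ hpJ))

lemma AffineIndependent.affineSpan_range_eq_top {d : ℕ} {z : Fin (d + 1) → Fin d → ℝ}
    (hz : AffineIndependent ℝ z) : affineSpan ℝ (Set.range z) = ⊤ :=
  hz.affineSpan_eq_top_iff_card_eq_finrank_add_one.mpr (by simp)

lemma AffineIndependent.exists_affEval_eq {d : ℕ} {z : Fin (d + 1) → Fin d → ℝ}
    (hz : AffineIndependent ℝ z) (v : Fin (d + 1) → ℝ) :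
    ∃ β : (Fin d → ℝ) × ℝ, ∀ t, affEval β (z t) = v t := by
  classical
  let b : AffineBasis (Fin (d + 1)) ℝ (Fin d → ℝ) := ⟨z, hz, hz.affineSpan_range_eq_top⟩
  obtain ⟨β, hβ⟩ :=
    affEvalAffine_surjective ((dotProductEquiv ℝ (Fin (d + 1)) v).toAffineMap.comp b.coords)
  refine ⟨β, fun s => ?_⟩
  rw [← coe_affEvalAffine, hβ, show z s = b s from rfl]
  simp [AffineBasis.coords_apply, AffineBasis.coord_apply, dotProduct]

lemma AffineIndependent.eq_of_affEval_eq {d : ℕ} {z : Fin (d + 1) → Fin d → ℝ}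
    (hz : AffineIndependent ℝ z) {β β' : (Fin d → ℝ) × ℝ}
    (h : ∀ t, affEval β (z t) = affEval β' (z t)) : β = β' :=
  affEvalAffine_injective <| AffineMap.ext_on hz.affineSpan_range_eq_top <| by
    rintro - ⟨t, rfl⟩
    simpa using h t

lemma List.SortedLE.countP_lt_getElem_le {α : Type*} [LinearOrder α] {l : List α}
    (hl : l.SortedLE) {j : ℕ} (hj : j < l.length) :
    l.countP (fun a => a < l[j]) ≤ j := by
  have hdrop : (l.drop j).countP (fun a => a < l[j]) = 0 := by
    refine List.countP_eq_zero.2 fun a ha => ?_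
    obtain ⟨i, hi, rfl⟩ := List.getElem_of_mem ha
    simpa [List.getElem_drop] using hl.getElem_le_getElem_of_le (Nat.le_add_right j i)
  calc l.countP (fun a => a < l[j])
      = (l.take j).countP (fun a => a < l[j]) + (l.drop j).countP (fun a => a < l[j]) := by
        rw [← List.countP_append, List.take_append_drop]
    _ ≤ j := by
        rw [hdrop, add_zero]
        exact List.countP_le_length.trans (List.length_take_le _ _)

lemma List.SortedLE.lt_countP_le_getElem {α : Type*} [LinearOrder α] {l : List α}
    (hl : l.SortedLE) {j : ℕ} (hj : j < l.length) :
    j < l.countP (fun a => a ≤ l[j]) := by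
  have htake : (l.take (j + 1)).countP (fun a => a ≤ l[j]) = j + 1 := by
    rw [List.countP_eq_length.2, List.length_take, min_eq_left hj]
    intro a ha
    obtain ⟨i, hi, rfl⟩ := List.getElem_of_mem ha
    have hij : i ≤ j := Nat.lt_succ_iff.1 (hi.trans_le (List.length_take_le _ _))
    simpa [List.getElem_take] using hl.getElem_le_getElem_of_le hij
  have hsub := (List.take_sublist (j + 1) l).countP_le (p := fun a => a ≤ l[j])
  omega

lemma countP_sort_map_eq_card_filter {n : ℕ} (s : Finset (Fin n)) (r : Fin n → ℝ)
    (p : ℝ → Prop) [DecidablePred p] :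
    (Multiset.sort (s.val.map r) (· ≤ ·)).countP (fun a => p a) = #{i ∈ s | p (r i)} := by
  rw [← Multiset.coe_countP, Multiset.sort_eq, Multiset.countP_map, Finset.card,
    Finset.filter_val]

section KthSmallest

variable {n : ℕ} {s : Finset (Fin n)} {r r' : Fin n → ℝ} {k : ℕ}

lemma kthSmallest_eq_getElem (hk : 1 ≤ k) (hks : k ≤ #s) :
    ∃ h : k - 1 < (Multiset.sort (s.val.map r) (· ≤ ·)).length,
      kthSmallest s r k = (Multiset.sort (s.val.map r) (· ≤ ·))[k - 1] := by
  have h : k - 1 < (Multiset.sort (s.val.map r) (· ≤ ·)).length := by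
    rw [Multiset.length_sort, Multiset.card_map]
    exact lt_of_lt_of_le (Nat.sub_lt hk one_pos) hks
  exact ⟨h, List.getD_eq_getElem _ _ h⟩

lemma card_filter_lt_kthSmallest_lt (hk : 1 ≤ k) (hks : k ≤ #s) :
    #{i ∈ s | r i < kthSmallest s r k} < k := by
  obtain ⟨h, hkth⟩ := kthSmallest_eq_getElem (r := r) hk hks
  rw [hkth, ← countP_sort_map_eq_card_filter s r (· < _)]
  have := (Multiset.pairwise_sort _ _).sortedLE.countP_lt_getElem_le h
  omega

lemma le_card_filter_le_kthSmallest (hk : 1 ≤ k) (hks : k ≤ #s) :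
    k ≤ #{i ∈ s | r i ≤ kthSmallest s r k} := by
  obtain ⟨h, hkth⟩ := kthSmallest_eq_getElem (r := r) hk hks
  rw [hkth, ← countP_sort_map_eq_card_filter s r (· ≤ _)]
  have := (Multiset.pairwise_sort _ _).sortedLE.lt_countP_le_getElem h
  omega

lemma kthSmallest_eq_of_card_filter (a : ℝ) (hlt : #{i ∈ s | r i < a} < k)
    (hle : k ≤ #{i ∈ s | r i ≤ a}) : kthSmallest s r k = a := by
  have hk : 1 ≤ k := Nat.one_le_of_lt hlt
  have hks : k ≤ #s := hle.trans (card_le_card (filter_subset _ _))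
  have hlt' := card_filter_lt_kthSmallest_lt (r := r) hk hks
  have hle' := le_card_filter_le_kthSmallest (r := r) hk hks
  rcases lt_trichotomy (kthSmallest s r k) a with h | h | h
  · have := card_le_card (monotone_filter_right s fun i _ (hi : r i ≤ kthSmallest s r k) =>
      hi.trans_lt h)
    omega
  · exact h
  · have := card_le_card (monotone_filter_right s fun i _ (hi : r i ≤ a) => hi.trans_lt h)
    omega

lemma kthSmallest_lt_kthSmallest (hk : 1 ≤ k) (hks : k ≤ #s) (h : ∀ i ∈ s, r i < r' i) :
    kthSmallest s r k < kthSmallest s r' k := by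
  by_contra! hge
  have hle := le_card_filter_le_kthSmallest (r := r') hk hks
  have hlt := card_filter_lt_kthSmallest_lt (r := r) hk hks
  have := card_le_card (monotone_filter_right s fun i hi (hi' : r' i ≤ kthSmallest s r' k) =>
    ((h i hi).trans_le hi').trans_le hge)
  omega

end KthSmallest

noncomputable def lexRank {n : ℕ} (s : Finset (Fin n)) (r : Fin n → ℝ) (a : Fin n) : ℕ :=
  #{i ∈ s | toLex (r i, i) ≤ toLex (r a, a)}

section LexRank

variable {n : ℕ} {s : Finset (Fin n)} {r : Fin n → ℝ} {a b : Fin n}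

lemma one_le_lexRank (ha : a ∈ s) : 1 ≤ lexRank s r a :=
  card_pos.2 ⟨a, mem_filter.2 ⟨ha, le_rfl⟩⟩

lemma lexRank_le_card : lexRank s r a ≤ #s :=
  card_le_card (filter_subset _ _)

lemma lexRank_lt_lexRank (hb : b ∈ s) (h : toLex (r a, a) < toLex (r b, b)) :
    lexRank s r a < lexRank s r b := by
  refine card_lt_card ⟨monotone_filter_right s fun i _ hi => hi.trans h.le, fun hsub => ?_⟩
  exact h.not_ge (mem_filter.1 (hsub (mem_filter.2 ⟨hb, le_rfl⟩))).2

lemma lexRank_injOn : Set.InjOn (lexRank s r) s := by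
  intro a ha b hb hab
  rcases lt_trichotomy (toLex (r a, a)) (toLex (r b, b)) with h | h | h
  · exact absurd hab (lexRank_lt_lexRank hb h).ne
  · exact congrArg Prod.snd (toLex.injective h)
  · exact absurd hab (lexRank_lt_lexRank ha h).ne'

lemma kthSmallest_lexRank (ha : a ∈ s) : kthSmallest s r (lexRank s r a) = r a := by
  refine kthSmallest_eq_of_card_filter _ (card_lt_card ⟨?_, fun hsub => ?_⟩)
    (card_le_card (monotone_filter_right s fun i _ hi => ?_))
  · exact monotone_filter_right s fun i _ hi => (Prod.Lex.toLex_lt_toLex.2 (Or.inl hi)).le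
  · exact lt_irrefl _ (mem_filter.1 (hsub (mem_filter.2 ⟨ha, le_rfl⟩))).2
  · rcases Prod.Lex.toLex_le_toLex.1 hi with h | h
    exacts [h.le, h.1.le]

end LexRank

lemma eq_of_kthSmallest_residual_eq_zero {d n : ℕ} {x : Fin n → Fin d → ℝ}
    {S : Fin (d + 1) → Finset (Fin n)} (hsep : WellSeparable (fun t => x '' ↑(S t)))
    (y : Fin n → ℝ) {κ : Fin (d + 1) → ℕ} (hκ : ∀ t, 1 ≤ κ t ∧ κ t ≤ #(S t))
    {β β' : (Fin d → ℝ) × ℝ}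
    (hβ : ∀ t, kthSmallest (S t) (fun i => y i - affEval β (x i)) (κ t) = 0)
    (hβ' : ∀ t, kthSmallest (S t) (fun i => y i - affEval β' (x i)) (κ t) = 0) :
    β = β' := by
  have hcross : ∀ t, ∃ z ∈ convexHull ℝ (x '' ↑(S t)),
      (affEvalAffine β - affEvalAffine β') z = 0 := by
    intro t
    obtain ⟨i, hi, hle⟩ : ∃ i ∈ S t, affEval β (x i) ≤ affEval β' (x i) := by
      by_contra! h
      exact (kthSmallest_lt_kthSmallest (hκ t).1 (hκ t).2 fun i hi =>
        sub_lt_sub_left (h i hi) (y i)).ne ((hβ t).trans (hβ' t).symm)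
    obtain ⟨j, hj, hge⟩ : ∃ j ∈ S t, affEval β' (x j) ≤ affEval β (x j) := by
      by_contra! h
      exact (kthSmallest_lt_kthSmallest (hκ t).1 (hκ t).2 fun i hi =>
        sub_lt_sub_left (h i hi) (y i)).ne ((hβ' t).trans (hβ t).symm)
    exact AffineMap.exists_mem_convexHull_eq_zero _ (Set.mem_image_of_mem x hi)
      (Set.mem_image_of_mem x hj) (by simpa using hle) (by simpa using hge)
  choose z hz hz0 using hcross
  exact (hsep.affineIndependent hz).eq_of_affEval_eq fun t => by
    simpa [sub_eq_zero] using hz0 t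

theorem stmt10_general (d n : ℕ) (x : Fin n → Fin d → ℝ) (S : Fin (d + 1) → Finset (Fin n))
    (hsep : WellSeparable (fun t => x '' ↑(S t)))
    (y : Fin n → ℝ) (k : Fin (d + 1) → ℕ)
    (hk : ∀ t, 1 ≤ k t ∧ k t ≤ (S t).card) :
    ∃ β : (Fin d → ℝ) × ℝ,
      ∀ t, kthSmallest (S t) (fun i => y i - affEval β (x i)) (k t) = 0 := by
  classical
  let T := Fintype.piFinset S
  let K := Fintype.piFinset fun t => Icc 1 #(S t)
  have hinterp : ∀ f ∈ T, ∃ β : (Fin d → ℝ) × ℝ, ∀ t, affEval β (x (f t)) = y (f t) :=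
    fun f hf => (hsep.affineIndependent fun t => subset_convexHull ℝ _
      (Set.mem_image_of_mem x (Fintype.mem_piFinset.1 hf t))).exists_affEval_eq _
  choose! B hB using hinterp
  let res f := fun i => y i - affEval (B f) (x i)
  let Ψ f t := lexRank (S t) (res f) (f t)
  have hΨ : ∀ f ∈ T, ∀ t, kthSmallest (S t) (res f) (Ψ f t) = 0 := fun f hf t => by
    rw [kthSmallest_lexRank (Fintype.mem_piFinset.1 hf t)]
    simp [res, hB f hf t]
  have hmaps : Set.MapsTo Ψ T K := fun f hf => Fintype.mem_piFinset.2 fun t =>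
    mem_Icc.2 ⟨one_le_lexRank (Fintype.mem_piFinset.1 hf t), lexRank_le_card⟩
  have hinj : Set.InjOn Ψ T := fun f hf f' hf' h => by
    have hBB : B f = B f' := eq_of_kthSmallest_residual_eq_zero hsep y
      (fun t => mem_Icc.1 (Fintype.mem_piFinset.1 (hmaps hf) t)) (hΨ f hf) (h ▸ hΨ f' hf')
    funext t
    exact lexRank_injOn (Fintype.mem_piFinset.1 hf t) (Fintype.mem_piFinset.1 hf' t)
      (by simpa [Ψ, res, hBB] using congrFun h t)
  have hcard : #K ≤ #T := by simp [T, K]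
  obtain ⟨f, hf, rfl⟩ := surjOn_of_injOn_of_card_le Ψ hmaps hinj hcard
    (Fintype.mem_piFinset.2 fun t => mem_Icc.2 (hk t))
  exact ⟨B f, hΨ f hf⟩

/-- Existence of resistant hyperplanes: for every vector `k` with `k t ∈ [|S t|]`, there
is an affine function making the `k t`-th smallest residual in each `S t` zero. -/
theorem stmt10 (d n : ℕ) (x : Fin n → Fin d → ℝ) (S : Fin (d + 1) → Finset (Fin n))
    (hne : ∀ t, (S t).Nonempty)
    (hdisj : ∀ t t', t ≠ t' → Disjoint (S t) (S t'))
    (hsep : WellSeparable (fun t => x '' ↑(S t)))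
    (y : Fin n → ℝ) (k : Fin (d + 1) → ℕ)
    (hk : ∀ t, 1 ≤ k t ∧ k t ≤ (S t).card) :
    ∃ β : (Fin d → ℝ) × ℝ,
      ∀ t, kthSmallest (S t) (fun i => y i - affEval β (x i)) (k t) = 0 :=
  stmt10_general d n x S hsep y k hk
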